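/- Let A be an n×n real symmetric matrix and let α be a set of P-vertices of A. Then the rows of A indexed by α are linearly independent. -/
import Mathlib


open Matrix

/-- The nullity of a square real matrix. -/
noncomputable def Matrix.nullity {ι : Type*} [Fintype ι] (A : Matrix ι ι ℝ) : ℕ :=
  Fintype.card ι - A.rank

/-- `A.subOn s` is the principal submatrix of `A` on the rows and columns indexed
by `s`; thus `A.subOn sᶜ` is the matrix `A(s)` obtained by deleting the rows and
columns indexed by `s`. -/
def Matrix.subOn {ι : Type*} (A : Matrix ι ι ℝ) (s : Finset ι) : Matrix s s ℝ :=
  A.submatrix Subtype.val Subtype.val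

/-- `α` is a P-set of `A` if deleting the rows and columns indexed by `α`
increases the nullity by `|α|`. -/
def Matrix.IsPSet {ι : Type*} [Fintype ι] [DecidableEq ι] (A : Matrix ι ι ℝ)
    (α : Finset ι) : Prop :=
  (A.subOn αᶜ).nullity = A.nullity + α.card

lemma nullity_eq_finrank_ker {ι : Type*} [Fintype ι] (A : Matrix ι ι ℝ) :
    A.nullity = Module.finrank ℝ (LinearMap.ker A.mulVecLin) := by
  have h := LinearMap.finrank_range_add_finrank_ker A.mulVecLin
  have hc : Module.finrank ℝ (ι → ℝ) = Fintype.card ι := by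
    simp [Module.finrank_pi]
  rw [hc] at h
  have hr : A.rank = Module.finrank ℝ (LinearMap.range A.mulVecLin) := rfl
  unfold Matrix.nullity
  omega

/-- The zero-extension linear map from functions on a finset to functions on ι. -/
def extLM {ι : Type*} [DecidableEq ι] (s : Finset ι) : ({x // x ∈ s} → ℝ) →ₗ[ℝ] (ι → ℝ) where
  toFun w j := if h : j ∈ s then w ⟨j, h⟩ else 0
  map_add' w₁ w₂ := by funext j; by_cases h : j ∈ s <;> simp [h]
  map_smul' c w := by funext j; by_cases h : j ∈ s <;> simp [h]

lemma pvertex_ker {n : ℕ} (A : Matrix (Fin n) (Fin n) ℝ) (i : Fin n)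
    (h : A.IsPSet {i}) (v : Fin n → ℝ) (hv : A.mulVecLin v = 0) : v i = 0 := by
  classical
  by_contra hvi
  set s : Finset (Fin n) := ({i} : Finset (Fin n))ᶜ with hs
  set B := A.subOn s with hB
  have hmem : ∀ j : Fin n, j ≠ i → j ∈ s := by
    intro j hj; simp [hs, hj]
  -- hypothesis as kernel dimensions
  have hdim : Module.finrank ℝ (LinearMap.ker B.mulVecLin)
      = Module.finrank ℝ (LinearMap.ker A.mulVecLin) + 1 := by
    have h2 := h
    unfold Matrix.IsPSet at h2
    rw [nullity_eq_finrank_ker, nullity_eq_finrank_ker] at h2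
    simpa using h2
  set K := LinearMap.ker A.mulVecLin with hK
  set f : K →ₗ[ℝ] ℝ := (LinearMap.proj i).comp K.subtype with hf
  have hfsurj : Function.Surjective f := by
    intro c
    refine ⟨(c / v i) • ⟨v, hv⟩, ?_⟩
    simp [hf, LinearMap.proj]
    field_simp
  have hfrank : Module.finrank ℝ (LinearMap.range f) = 1 := by
    rw [LinearMap.range_eq_top.mpr hfsurj]
    simp
  have hKdim : Module.finrank ℝ K = Module.finrank ℝ (LinearMap.ker f) + 1 := by
    have h3 := LinearMap.finrank_range_add_finrank_ker f
    omega
  set E := extLM (ι := Fin n) s with hE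
  have hEi : ∀ w, E w i = 0 := by
    intro w; simp [hE, extLM, hs]
  have hEk : ∀ w (k : {x // x ∈ s}), E w k = w k := by
    intro w k; simp [hE, extLM, k.2]
  have hmul : ∀ w : {x // x ∈ s} → ℝ, ∀ j : Fin n, (hj : j ≠ i) →
      A.mulVecLin (E w) j = B.mulVecLin w ⟨j, hmem j hj⟩ := by
    intro w j hj
    simp only [mulVecLin_apply, mulVec, dotProduct, hB, Matrix.subOn, submatrix_apply]
    rw [show (∑ x : {x // x ∈ s}, A j ↑x * w x) = ∑ x : {x // x ∈ s}, A j ↑x * E w ↑x from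
        Finset.sum_congr rfl fun k _ => by rw [hEk],
      Finset.sum_coe_sort s (fun k => A j k * E w k)]
    refine (Finset.sum_subset (Finset.subset_univ s) fun k _ hk => ?_).symm
    have hki : k = i := by by_contra hki; exact hk (hmem k hki)
    rw [hki, hEi, mul_zero]
  -- the map g on the kernel of B
  set g : LinearMap.ker B.mulVecLin →ₗ[ℝ] ℝ :=
    (LinearMap.proj i).comp ((A.mulVecLin.comp E).comp (LinearMap.ker B.mulVecLin).subtype)
    with hg
  set Λ : LinearMap.ker g →ₗ[ℝ] (Fin n → ℝ) :=
    E.comp ((LinearMap.ker B.mulVecLin).subtype.comp (LinearMap.ker g).subtype) with hΛ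
  have hmemK : ∀ x : LinearMap.ker g, Λ x ∈ K := by
    intro x
    simp only [hK, LinearMap.mem_ker]
    funext j
    by_cases hj : j = i
    · subst hj
      have hx := x.2
      simp only [LinearMap.mem_ker, hg, LinearMap.comp_apply, LinearMap.proj_apply] at hx
      exact hx
    · rw [hΛ]
      simp only [LinearMap.comp_apply, Submodule.coe_subtype]
      rw [hmul _ j hj]
      have hx := x.1.2
      simp only [LinearMap.mem_ker] at hx
      simp [hx]
  set Λ' : LinearMap.ker g →ₗ[ℝ] K := Λ.codRestrict K hmemK with hΛ'
  have hmemf : ∀ x : LinearMap.ker g, Λ' x ∈ LinearMap.ker f := by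
    intro x
    simp only [LinearMap.mem_ker, hf, LinearMap.comp_apply, LinearMap.proj_apply,
      Submodule.coe_subtype, hΛ', LinearMap.codRestrict_apply]
    show Λ x i = 0
    rw [hΛ]
    simp only [LinearMap.comp_apply, Submodule.coe_subtype]
    exact hEi _
  set φ : LinearMap.ker g →ₗ[ℝ] LinearMap.ker f :=
    LinearMap.codRestrict (LinearMap.ker f) Λ' hmemf with hφdef
  have hφ : Function.Injective φ := by
    intro x y hxy
    have hΛxy : Λ x = Λ y := by
      have := congrArg (Subtype.val ∘ Subtype.val) hxy
      exact this
    have hExy : E x.1.1 = E y.1.1 := hΛxy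
    have : x.1.1 = y.1.1 := by
      funext k
      have hk := congrFun hExy k
      rwa [hEk, hEk] at hk
    exact Subtype.ext (Subtype.ext this)
  have h1 : Module.finrank ℝ (LinearMap.ker g) ≤ Module.finrank ℝ (LinearMap.ker f) :=
    LinearMap.finrank_le_finrank_of_injective hφ
  have h2 : Module.finrank ℝ (LinearMap.ker B.mulVecLin)
      ≤ Module.finrank ℝ (LinearMap.ker g) + 1 := by
    have h3 := LinearMap.finrank_range_add_finrank_ker g
    have h4 : Module.finrank ℝ (LinearMap.range g) ≤ 1 := by
      have := (LinearMap.range g).finrank_le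
      simpa using this
    omega
  omega


/-- If `α` is a set of P-vertices of the symmetric matrix `A`, then the rows of
`A` indexed by `α` are linearly independent. -/
theorem rows_linearIndependent_of_pvertices {n : ℕ} (A : Matrix (Fin n) (Fin n) ℝ)
    (hA : A.IsSymm) (α : Finset (Fin n)) (hPvert : ∀ i ∈ α, A.IsPSet {i}) :
    LinearIndependent ℝ (fun i : α => A i) := by
  classical
  rw [Fintype.linearIndependent_iff]
  intro c hc i
  set v : Fin n → ℝ := fun j => if h : j ∈ α then c ⟨j, h⟩ else 0 with hv
  have hker : A.mulVecLin v = 0 := by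
    funext j
    have hcj := congrFun hc j
    simp only [mulVecLin_apply, mulVec, dotProduct]
    calc ∑ k, A j k * v k = ∑ k, v k * A k j := by
          refine Finset.sum_congr rfl fun k _ => ?_
          rw [mul_comm, ← hA.apply k j]
      _ = ∑ k ∈ α, v k * A k j := by
          rw [← Finset.sum_subset (Finset.subset_univ α)]
          intro k _ hk
          simp [hv, hk]
      _ = ∑ k : α, c k * A k j := by
          rw [← Finset.sum_coe_sort α (fun k => v k * A k j)]
          exact Finset.sum_congr rfl fun k _ => by simp [hv, k.2]
      _ = 0 := by simpa using hcj
  have := pvertex_ker A i (hPvert i i.2) v hker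
  rw [hv] at this
  simpa [i.2] using this
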